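/- arXiv:1212.6856 — 2 statements merged into one kernel-verified Lean document; each statement's English description precedes it below -/
import Mathlib

section
/- In the linear viewcount model, if π_G/λ_G ≤ π_B/λ_B and π_G/(λ_G + λ_pu) ≥ π_B/(λ_B + λ_pu) with all parameters positive, then every threshold β with 0 ≤ β ≤ β_max is a symmetric Wardrop equilibrium, i.e., every such β is a best response to itself with respect to the piecewise-affine utility U(α, β) defined by U(α,β) = τ(π_G − π_B) − β(π_G/λ_G − π_B/λ_B) if β ≤ α, and U(α,β) = τ(π_G − π_B) − α(π_G/λ_G − π_B/λ_B) − (β−α)(π_G/(λ_G+λ_pu) − π_B/(λ_B+λ_pu)) if β ≥ α. -/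
theorem ite_affine_le_at_kink {c a b α β : ℝ} (ha : a ≤ 0) (hb : 0 ≤ b) :
    (if β ≤ α then c - β * a else c - α * a - (β - α) * b) ≤ c - α * a := by
  split_ifs with h
  · linarith [mul_le_mul_of_nonpos_right h ha]
  · linarith [mul_nonneg (sub_nonneg.mpr (not_le.mp h).le) hb]

theorem stmt3_general (τ πG πB lG lB lpu βmax : ℝ)
    (h1 : πG / lG ≤ πB / lB)
    (h2 : πG / (lG + lpu) ≥ πB / (lB + lpu))
    (U : ℝ → ℝ → ℝ)
    (hU : ∀ α β, U α β =
      if β ≤ α then τ * (πG - πB) - β * (πG / lG - πB / lB)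
      else τ * (πG - πB) - α * (πG / lG - πB / lB)
            - (β - α) * (πG / (lG + lpu) - πB / (lB + lpu))) :
    ∀ α ∈ Set.Icc (0 : ℝ) βmax, ∀ β ∈ Set.Icc (0 : ℝ) βmax, U α β ≤ U α α := by
  intro α _ β _
  rw [hU, hU, if_pos le_rfl]
  exact ite_affine_le_at_kink (sub_nonpos.mpr h1) (sub_nonneg.mpr h2)

theorem stmt3 (τ πG πB lG lB lpu βmax : ℝ)
    (hπG : 0 ≤ πG) (hπB : 0 ≤ πB) (hsum : πG + πB = 1)
    (hlG : 0 < lG) (hlB : 0 < lB) (hlpu : 0 < lpu) (hτ : 0 < τ) (hβmax : 0 < βmax)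
    (h1 : πG / lG ≤ πB / lB)
    (h2 : πG / (lG + lpu) ≥ πB / (lB + lpu))
    (U : ℝ → ℝ → ℝ)
    (hU : ∀ α β, U α β =
      if β ≤ α then τ * (πG - πB) - β * (πG / lG - πB / lB)
      else τ * (πG - πB) - α * (πG / lG - πB / lB)
            - (β - α) * (πG / (lG + lpu) - πB / (lB + lpu))) :
    ∀ α ∈ Set.Icc (0 : ℝ) βmax, ∀ β ∈ Set.Icc (0 : ℝ) βmax, U α β ≤ U α α :=
  stmt3_general τ πG πB lG lB lpu βmax h1 h2 U hU
end

section
/- Let W be the principal Lambert W function. For fixed c ∈ (0, 1] (representing 1 − β/N) and a ∈ [1, ∞) (representing 1/(1 − α/N)), define f(y) = y·W(a·y·e^{yc}) / (1 + W(a·y·e^{yc}))² for y > 0. If y·c ≤ 1, then f′(y) ≥ 0, i.e., f is nondecreasing at y. -/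
/-!
Since `W` inverts `t ↦ t e^t` on `(0, ∞)`, it is differentiable there with
`W' x = W x / (x (1 + W x))`. For the inner map `u y = a y e^{yc}` one has `u' / u = 1 / y + c`,
so `w = W (u y)` satisfies `y w' = (1 + yc) w / (1 + w)`. Substituting into the quotient rule gives
`f' y = w (w² + w (1 - yc) + 2 + yc) / (1 + w)⁴`, which is nonnegative as soon as `yc ≤ 1`.
-/

open Real Set

theorem strictMonoOn_mul_exp : StrictMonoOn (fun t : ℝ => t * exp t) (Ici 0) :=
  fun s hs _ _ hst => mul_lt_mul'' hst (exp_lt_exp.2 hst) hs (exp_pos s).le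

section LambertW

variable {W : ℝ → ℝ}

theorem lambertW_pos (hW : ∀ x > 0, W x * exp (W x) = x) {x : ℝ} (hx : 0 < x) : 0 < W x :=
  pos_of_mul_pos_left (by rwa [hW x hx]) (exp_pos _).le

theorem lambertW_strictMonoOn (hW : ∀ x > 0, W x * exp (W x) = x) :
    StrictMonoOn W (Ioi 0) := by
  intro x₁ hx₁ x₂ hx₂ hx
  refine (strictMonoOn_mul_exp.lt_iff_lt (lambertW_pos hW hx₁).le (lambertW_pos hW hx₂).le).1 ?_
  simpa only [hW x₁ hx₁, hW x₂ hx₂] using hx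

theorem lambertW_mul_exp_self (hW : ∀ x > 0, W x * exp (W x) = x) {t : ℝ} (ht : 0 < t) :
    W (t * exp t) = t := by
  have hx : 0 < t * exp t := mul_pos ht (exp_pos t)
  exact strictMonoOn_mul_exp.injOn (mem_Ici.2 (lambertW_pos hW hx).le) (mem_Ici.2 ht.le)
    (hW _ hx)

theorem lambertW_continuousAt (hW : ∀ x > 0, W x * exp (W x) = x) {x : ℝ} (hx : 0 < x) :
    ContinuousAt W x := by
  refine (lambertW_strictMonoOn hW).continuousAt_of_image_mem_nhds (Ioi_mem_nhds hx) ?_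
  filter_upwards [Ioi_mem_nhds (lambertW_pos hW hx)] with t ht
  exact ⟨t * exp t, mul_pos ht (exp_pos t), lambertW_mul_exp_self hW ht⟩

theorem lambertW_hasDerivAt (hW : ∀ x > 0, W x * exp (W x) = x) {x : ℝ} (hx : 0 < x) :
    HasDerivAt W (W x / (x * (1 + W x))) x := by
  have hw := lambertW_pos hW hx
  have hmul : HasDerivAt (fun t => t * exp t) ((1 + W x) * exp (W x)) (W x) :=
    ((hasDerivAt_id' (W x)).mul (hasDerivAt_exp (W x))).congr_deriv (by ring)
  have hinv : ∀ᶠ z in nhds x, W z * exp (W z) = z := by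
    filter_upwards [Ioi_mem_nhds hx] with z hz using hW z hz
  refine (hmul.of_local_left_inverse (lambertW_continuousAt hW hx) (by positivity) hinv).congr_deriv ?_
  have hx' := hW x hx
  generalize W x = w at hx' hw ⊢
  subst hx'
  field_simp

theorem hasDerivAt_lambertW_comp_mul_exp (hW : ∀ x > 0, W x * exp (W x) = x) {a c y : ℝ}
    (ha : 0 < a) (hy : 0 < y) :
    HasDerivAt (fun z => W (a * z * exp (z * c)))
      ((1 + y * c) * W (a * y * exp (y * c)) / ((1 + W (a * y * exp (y * c))) * y)) y := by
  have hu : HasDerivAt (fun z => a * z * exp (z * c))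
      (a * exp (y * c) + a * y * (exp (y * c) * c)) y := by
    have hexp := ((hasDerivAt_id y).mul_const c).exp
    simpa using ((hasDerivAt_id' y).const_mul a).fun_mul (by simpa using hexp)
  have hx : 0 < a * y * exp (y * c) := by positivity
  refine ((lambertW_hasDerivAt hW hx).comp y hu).congr_deriv ?_
  have hw := lambertW_pos hW hx
  field_simp

end LambertW

theorem HasDerivAt.mul_div_one_add_sq {h : ℝ → ℝ} {h' y : ℝ} (hh : HasDerivAt h h' y)
    (hy : 1 + h y ≠ 0) :
    HasDerivAt (fun z => z * h z / (1 + h z) ^ 2)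
      ((h y * (1 + h y) + y * h' * (1 - h y)) / (1 + h y) ^ 3) y := by
  refine (((hasDerivAt_id' y).fun_mul hh).fun_div ((hh.const_add 1).fun_pow 2)
    (pow_ne_zero 2 hy)).congr_deriv ?_
  field_simp
  ring

theorem stmt7_general (W : ℝ → ℝ)
    (hW : ∀ x ≥ 0, W x * Real.exp (W x) = x)
    (c a : ℝ) (hc : 0 < c) (ha : 1 ≤ a)
    (f : ℝ → ℝ)
    (hf : ∀ y, f y = y * W (a * y * Real.exp (y * c))
        / (1 + W (a * y * Real.exp (y * c))) ^ 2) :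
    ∀ y, 0 < y → y * c ≤ 1 → 0 ≤ deriv f y := by
  intro y hy hyc
  have hW' : ∀ x > 0, W x * exp (W x) = x := fun x hx => hW x hx.le
  have ha₀ : 0 < a := by linarith
  set w := W (a * y * exp (y * c))
  have hw : 0 < w := lambertW_pos hW' (by positivity)
  have hderiv :=
    (hasDerivAt_lambertW_comp_mul_exp hW' ha₀ (c := c) hy).mul_div_one_add_sq (by positivity)
  have hnum : w * (1 + w) + y * ((1 + y * c) * w / ((1 + w) * y)) * (1 - w)
      = w * (w ^ 2 + w * (1 - y * c) + 2 + y * c) / (1 + w) := by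
    field_simp
    ring
  rw [funext hf, hderiv.deriv, hnum]
  positivity

theorem stmt7 (W : ℝ → ℝ)
    (hW : ∀ x ≥ 0, W x * Real.exp (W x) = x)
    (hW0 : ∀ x ≥ 0, 0 ≤ W x)
    (c a : ℝ) (hc : 0 < c) (hc1 : c ≤ 1) (ha : 1 ≤ a)
    (f : ℝ → ℝ)
    (hf : ∀ y, f y = y * W (a * y * Real.exp (y * c))
        / (1 + W (a * y * Real.exp (y * c))) ^ 2) :
    ∀ y, 0 < y → y * c ≤ 1 → 0 ≤ deriv f y :=
  stmt7_general W hW c a hc ha f hf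
end
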